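/- In the epidemic setting with severity, testing and app usage, let t ∈ ℝ with Ω_t nonempty, let a ∈ {app, no app}, and assume the app-refined suppression hypothesis holds at all times t' < t. Define F̌^{T,a}_t(ρ) := P_t(τ̌^T_t ≤ ρ and Â_t = a), where τ̌^T(ω) := τ^T(σ(ω)) − τ^σ(ω). Then for every ρ > 0, F̌^{T,a}_t(ρ) − F̌^{T,a}_t(0) = Σ_g Σ_{τ > 0} ((F^T_{t−τ,g,a}(ρ + τ) − F^T_{t−τ,g,a}(τ))/(1 − ξ_{t−τ}·F^T_{t−τ,g,a}(τ))) · P_t(τ^σ_t = τ, Ĝ_t = g, Â_t = a), where g ranges over the range of G and the sum over τ runs over the finitely many positive generation times with Ω_{t−τ,g,a} nonempty. -/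

import Mathlib

open Finset
open scoped Classical ENNReal NNReal

noncomputable section

variable {Ω : Type*} [Fintype Ω]

/-- Number of elements of `Ω` satisfying `E`, as a real number. -/
def cnt (E : Ω → Prop) : ℝ := ((Finset.univ.filter E).card : ℝ)

/-- The uniform (counting) probability of the event `E`. -/
def pr (E : Ω → Prop) : ℝ := cnt E / (Fintype.card Ω : ℝ)

/-- The conditional probability of the event `E` given the event `C`
(junk value `0` if `C` is empty). -/
def prC (C E : Ω → Prop) : ℝ := cnt (fun ω => C ω ∧ E ω) / cnt C

/-- The expectation of `X` under the uniform probability measure. -/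
def expec (X : Ω → ℝ) : ℝ := (∑ ω, X ω) / (Fintype.card Ω : ℝ)

/-- The conditional expectation of `X` given the event `C`, i.e. the average of `X`
over `C` (junk value `0` if `C` is empty). -/
def expecC (C : Ω → Prop) (X : Ω → ℝ) : ℝ :=
  (∑ ω ∈ Finset.univ.filter C, X ω) / cnt C

end

/-- Whether or not an individual uses the contact-tracing app. -/
inductive AppUse : Type
  | app : AppUse
  | noapp : AppUse
  deriving DecidableEq

instance : Fintype AppUse :=
  ⟨{AppUse.app, AppUse.noapp}, fun x => by cases x <;> simp⟩


noncomputable section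

variable {Ω : Type*} [Fintype Ω]

/-- `ninf tI σ τ ω` is the number of people infected by `ω` exactly at `ω`'s infectious
age `τ`: the number of `ω' ∈ Ω_{>0}` with `σ ω' = ω` and generation time `τ^σ ω' = τ`. -/
def ninf (tI : Ω → ℝ) (σ : Ω → Ω) (τ : ℝ) (ω : Ω) : ℝ :=
  cnt (fun ω' => 0 < tI ω' ∧ σ ω' = ω ∧ tI ω' - tI (σ ω') = τ)

/-- The (finitely many) positive times `τ` such that `Ω_{t-τ}` is nonempty. -/
def genTimes (tI : Ω → ℝ) (t : ℝ) : Finset ℝ :=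
  (Finset.univ.image (fun ω' => t - tI ω')).filter (fun τ => 0 < τ)

end

noncomputable section

variable {Ω : Type*} [Fintype Ω]

/-- The (finitely many) positive times `τ` such that `Ω_{t-τ,g,a}` is nonempty. -/
def genTimesGA (tI G : Ω → ℝ) (A : Ω → AppUse) (t g : ℝ) (a : AppUse) : Finset ℝ :=
  ((Finset.univ.filter (fun ω' => G ω' = g ∧ A ω' = a)).image (fun ω' => t - tI ω')).filter
    (fun τ => 0 < τ)

/-- `FT tI G τT t' g τ` is the improper CDF `F^T_{t',g}(τ) = P_{t',g}(τ^T ≤ τ)` of the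
testing time of individuals infected at `t'` with severity `g`. -/
def FT (tI G : Ω → ℝ) (τT : Ω → ℝ≥0∞) (t' g τ : ℝ) : ℝ :=
  prC (fun ω => tI ω = t' ∧ G ω = g) (fun ω => (τT ω : EReal) ≤ (τ : ℝ))

/-- `FTa tI G A τT t' g a τ` is the improper CDF
`F^T_{t',g,a}(τ) = P_{t',g,a}(τ^T ≤ τ)` of the testing time of individuals infected at
`t'` with severity `g` and app usage `a`. -/
def FTa (tI G : Ω → ℝ) (A : Ω → AppUse) (τT : Ω → ℝ≥0∞) (t' g : ℝ) (a : AppUse)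
    (τ : ℝ) : ℝ :=
  prC (fun ω => tI ω = t' ∧ G ω = g ∧ A ω = a) (fun ω => (τT ω : EReal) ≤ (τ : ℝ))

end

/-! Split the infectees `ω ∈ Ω_t` with `0 < τ̌^T(ω) ≤ ρ` and `Â(ω) = a` according to the
severity `g` of the infector and the generation time `τ`. Those in one class are counted by
summing `n^τ` over the infectors in `Ω_{t-τ,g,a}` whose testing time lies in `(τ, ρ + τ]`.
By the suppression hypothesis, every testing time in that window carries the same mean
offspring `E(n^τ) / (1 - ξ F^T(τ))`, so the sum is `(F^T(ρ+τ) - F^T(τ)) / (1 - ξ F^T(τ))`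
times the total number of infectees at age `τ` of infectors in `Ω_{t-τ,g,a}`. -/

lemma EReal.coe_sub_coe_le_coe_iff (x : EReal) (r s : ℝ) :
    x - (r : EReal) ≤ (s : EReal) ↔ x ≤ ((s + r : ℝ) : EReal) := by
  rw [EReal.sub_le_iff_le_add (.inl (EReal.coe_ne_bot r)) (.inl (EReal.coe_ne_top r)),
    EReal.coe_add]

lemma Finset.sum_eq_mul_card_of_sum_fiber_eq_mul_card {ι β : Type*} [DecidableEq β]
    (s : Finset ι) (f : ι → β) (n : ι → ℝ) (c : ℝ)
    (h : ∀ b ∈ s.image f, ∑ i ∈ s with f i = b, n i = c * #{i ∈ s | f i = b}) :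
    ∑ i ∈ s, n i = c * #s := by
  rw [← sum_fiberwise_of_maps_to (fun i hi => mem_image_of_mem f hi),
    card_eq_sum_card_image f s, Nat.cast_sum, mul_sum]
  exact sum_congr rfl h

section Counting

variable {Ω : Type*} [Fintype Ω]

lemma cnt_eq_card (P : Ω → Prop) [DecidablePred P] : cnt P = #{ω | P ω} := by
  rw [cnt]
  congr!

lemma cnt_pos {C : Ω → Prop} (hC : ∃ ω, C ω) : 0 < cnt C := by
  obtain ⟨ω, hω⟩ := hC
  exact Nat.cast_pos.mpr (card_pos.mpr ⟨ω, by simpa using hω⟩)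

lemma prC_pos {C E : Ω → Prop} (h : ∃ ω, C ω ∧ E ω) : 0 < prC C E :=
  div_pos (cnt_pos h) (cnt_pos (h.imp fun _ => And.left))

lemma expecC_mul_cnt {C : Ω → Prop} [DecidablePred C] (hC : ∃ ω, C ω) (X : Ω → ℝ) :
    expecC C X * cnt C = ∑ ω with C ω, X ω := by
  rw [expecC, div_mul_cancel₀ _ (cnt_pos hC).ne']
  congr!

lemma cnt_sub_cnt_of_imp {P Q : Ω → Prop} (h : ∀ ω, Q ω → P ω) :
    cnt P - cnt Q = cnt (fun ω => P ω ∧ ¬ Q ω) := by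
  have hsub : univ.filter Q ⊆ univ.filter P := fun ω => by simpa using h ω
  rw [cnt, cnt, cnt, ← Nat.cast_sub (card_le_card hsub), ← card_sdiff_of_subset hsub]
  congr 2
  ext ω
  simp

lemma cnt_eq_sum_cnt_fiber {β : Type*} [DecidableEq β] (P : Ω → Prop) (f : Ω → β)
    (t : Finset β) (h : ∀ ω, P ω → f ω ∈ t) :
    cnt P = ∑ b ∈ t, cnt (fun ω => P ω ∧ f ω = b) := by
  rw [cnt, card_eq_sum_card_fiberwise (s := univ.filter P) (t := t)
    fun ω hω => h ω (by simpa using hω), Nat.cast_sum]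
  simp only [filter_filter, cnt]
  congr!

lemma sum_testTime_window_eq {C : Ω → Prop} (n : Ω → ℝ) (k : Ω → ℝ≥0∞) {ξv τ u : ℝ}
    (hτu : τ ≤ u)
    (hsup : ∀ ρ' : ℝ≥0∞, 0 < prC C (fun ω => k ω = ρ') →
      expecC (fun ω => C ω ∧ k ω = ρ') n =
        ((1 - ξv * if (ρ' : EReal) ≤ (τ : ℝ) then (1 : ℝ) else 0) /
          (1 - ξv * prC C (fun ω => (k ω : EReal) ≤ (τ : ℝ)))) * expecC C n) :
    ∑ ω with C ω ∧ (τ : EReal) < k ω ∧ (k ω : EReal) ≤ (u : ℝ), n ω =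
      ((prC C (fun ω => (k ω : EReal) ≤ (u : ℝ)) - prC C (fun ω => (k ω : EReal) ≤ (τ : ℝ))) /
          (1 - ξv * prC C (fun ω => (k ω : EReal) ≤ (τ : ℝ)))) * ∑ ω with C ω, n ω := by
  set F := prC C (fun ω => (k ω : EReal) ≤ (τ : ℝ))
  set W : Ω → Prop := fun ω => C ω ∧ (τ : EReal) < k ω ∧ (k ω : EReal) ≤ (u : ℝ)
  have hwindow : prC C (fun ω => (k ω : EReal) ≤ (u : ℝ)) - F = cnt W / cnt C := by
    simp only [F, prC]
    rw [div_sub_div_same, cnt_sub_cnt_of_imp]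
    · congr 2
      funext ω
      apply propext
      simp only [W, not_and, not_le]
      tauto
    · exact fun ω ⟨hC, hk⟩ => ⟨hC, hk.trans (EReal.coe_le_coe_iff.mpr hτu)⟩
  have hfiber : ∀ b ∈ (univ.filter W).image k,
      ∑ ω ∈ univ.filter W with k ω = b, n ω =
        expecC C n / (1 - ξv * F) * #{ω ∈ univ.filter W | k ω = b} := by
    intro b hb
    obtain ⟨ω₀, hω₀, rfl⟩ := mem_image.mp hb
    obtain ⟨hC₀, hlt₀, -⟩ := (mem_filter.mp hω₀).2
    have hfib : {ω ∈ univ.filter W | k ω = k ω₀} = univ.filter (fun ω => C ω ∧ k ω = k ω₀) := by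
      ext ω
      simp only [W, mem_filter, mem_univ, true_and]
      constructor
      · exact fun ⟨⟨hC, _⟩, hk⟩ => ⟨hC, hk⟩
      · rintro ⟨hC, hk⟩
        exact ⟨⟨hC, hk ▸ (mem_filter.mp hω₀).2.2⟩, hk⟩
    rw [hfib, ← expecC_mul_cnt ⟨ω₀, hC₀, rfl⟩, hsup _ (prC_pos ⟨ω₀, hC₀, rfl⟩),
      if_neg (not_le.mpr hlt₀), cnt_eq_card]
    ring
  change ∑ ω ∈ univ.filter W, n ω = _
  rw [sum_eq_mul_card_of_sum_fiber_eq_mul_card _ k n _ hfiber, hwindow, expecC]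
  simp only [cnt_eq_card]
  ring

end Counting

section Epidemic

variable {Ω : Type*} [Fintype Ω]

lemma cnt_infectees_eq_sum_ninf (tI : Ω → ℝ) (σ : Ω → Ω) (t τ : ℝ) (Q : Ω → Prop) :
    cnt (fun ω => tI ω = t ∧ 0 < tI ω ∧ tI ω - tI (σ ω) = τ ∧ Q (σ ω)) =
      ∑ ω' with tI ω' = t - τ ∧ Q ω', ninf tI σ τ ω' := by
  rw [cnt_eq_sum_cnt_fiber _ σ (univ.filter fun ω' => tI ω' = t - τ ∧ Q ω')
    fun ω ⟨ht, _, hτ, hQ⟩ => by simpa using ⟨by linarith, hQ⟩]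
  refine sum_congr rfl fun ω' hω' => congrArg cnt (funext fun ω => propext ?_)
  obtain ⟨ht', hQ'⟩ := (mem_filter.mp hω').2
  constructor
  · rintro ⟨⟨-, hpos, hτ, -⟩, rfl⟩
    exact ⟨hpos, rfl, hτ⟩
  · rintro ⟨hpos, rfl, hτ⟩
    exact ⟨⟨by linarith, hpos, hτ, hQ'⟩, rfl⟩

lemma mem_genTimesGA {tI G : Ω → ℝ} {A : Ω → AppUse} {t g τ : ℝ} {a : AppUse} :
    τ ∈ genTimesGA tI G A t g a ↔ 0 < τ ∧ ∃ ω, G ω = g ∧ A ω = a ∧ tI ω = t - τ := by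
  simp only [genTimesGA, mem_filter, mem_image, mem_univ, true_and]
  constructor
  · rintro ⟨⟨ω, ⟨hg, ha⟩, rfl⟩, hτ⟩
    exact ⟨hτ, ω, hg, ha, by ring⟩
  · rintro ⟨hτ, ω, hg, ha, ht⟩
    exact ⟨⟨ω, ⟨hg, ha⟩, by linarith⟩, hτ⟩

lemma cnt_infectees_testTime_window_eq (tI : Ω → ℝ) (σ : Ω → Ω) (G : Ω → ℝ) (A : Ω → AppUse)
    (τT : Ω → ℝ≥0∞) (ξv t g τ ρ : ℝ) (a : AppUse) (hρ : 0 ≤ ρ)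
    (hsup : ∀ ρ' : ℝ≥0∞,
      0 < prC (fun ω => tI ω = t - τ ∧ G ω = g ∧ A ω = a) (fun ω => τT ω = ρ') →
        expecC (fun ω => tI ω = t - τ ∧ G ω = g ∧ A ω = a ∧ τT ω = ρ') (ninf tI σ τ) =
          ((1 - ξv * (if (ρ' : EReal) ≤ (τ : ℝ) then (1 : ℝ) else 0)) /
              (1 - ξv * FTa tI G A τT (t - τ) g a τ)) *
            expecC (fun ω => tI ω = t - τ ∧ G ω = g ∧ A ω = a) (ninf tI σ τ)) :
    cnt (fun ω => tI ω = t ∧ 0 < tI ω ∧ tI ω - tI (σ ω) = τ ∧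
        (G (σ ω) = g ∧ A (σ ω) = a ∧
          (τ : EReal) < τT (σ ω) ∧ (τT (σ ω) : EReal) ≤ ((ρ + τ : ℝ) : EReal))) =
      ((FTa tI G A τT (t - τ) g a (ρ + τ) - FTa tI G A τT (t - τ) g a τ) /
          (1 - ξv * FTa tI G A τT (t - τ) g a τ)) *
        cnt (fun ω => tI ω = t ∧ 0 < tI ω ∧ tI ω - tI (σ ω) = τ ∧
          (G (σ ω) = g ∧ A (σ ω) = a)) := by
  rw [cnt_infectees_eq_sum_ninf tI σ t τ fun ω' => G ω' = g ∧ A ω' = a ∧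
      (τ : EReal) < τT ω' ∧ (τT ω' : EReal) ≤ ((ρ + τ : ℝ) : EReal),
    cnt_infectees_eq_sum_ninf tI σ t τ fun ω' => G ω' = g ∧ A ω' = a]
  have hwindow := sum_testTime_window_eq (C := fun ω => tI ω = t - τ ∧ G ω = g ∧ A ω = a)
    (ninf tI σ τ) τT (u := ρ + τ) (by linarith)
    fun ρ' hpos => by simpa only [FTa, and_assoc] using hsup ρ' hpos
  simp only [FTa, and_assoc] at hwindow ⊢
  convert hwindow

lemma cnt_sub_cnt_infectorTested_eq_sum (tI : Ω → ℝ) (σ : Ω → Ω)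
    (hσ : ∀ ω, 0 < tI ω → tI (σ ω) < tI ω) (G : Ω → ℝ) (A : Ω → AppUse) (τT : Ω → ℝ≥0∞)
    (t ρ : ℝ) (a : AppUse) (hρ : 0 ≤ ρ) :
    cnt (fun ω => tI ω = t ∧ 0 < tI ω ∧
        (τT (σ ω) : EReal) ≤ ((ρ + (tI ω - tI (σ ω)) : ℝ) : EReal) ∧ A (σ ω) = a) -
      cnt (fun ω => tI ω = t ∧ 0 < tI ω ∧
        (τT (σ ω) : EReal) ≤ ((tI ω - tI (σ ω) : ℝ) : EReal) ∧ A (σ ω) = a) =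
      ∑ g ∈ univ.image G, ∑ τ ∈ genTimesGA tI G A t g a,
        cnt (fun ω => tI ω = t ∧ 0 < tI ω ∧ tI ω - tI (σ ω) = τ ∧
          (G (σ ω) = g ∧ A (σ ω) = a ∧
            (τ : EReal) < τT (σ ω) ∧ (τT (σ ω) : EReal) ≤ ((ρ + τ : ℝ) : EReal))) := by
  set D : Ω → Prop := fun ω => tI ω = t ∧ 0 < tI ω ∧ A (σ ω) = a ∧
    ((tI ω - tI (σ ω) : ℝ) : EReal) < τT (σ ω) ∧
    (τT (σ ω) : EReal) ≤ ((ρ + (tI ω - tI (σ ω)) : ℝ) : EReal)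
  trans cnt D
  · rw [cnt_sub_cnt_of_imp fun ω ⟨ht, hpos, hle, ha⟩ =>
      ⟨ht, hpos, hle.trans (EReal.coe_le_coe_iff.mpr (by linarith)), ha⟩]
    congr 1
    funext ω
    apply propext
    simp only [D, not_and, ← not_le]
    tauto
  rw [cnt_eq_sum_cnt_fiber D (G ∘ σ) _ fun ω _ => mem_image_of_mem G (mem_univ (σ ω))]
  refine sum_congr rfl fun g _ => ?_
  rw [cnt_eq_sum_cnt_fiber _ (fun ω => tI ω - tI (σ ω)) (genTimesGA tI G A t g a)
    fun ω ⟨⟨ht, hpos, ha, _⟩, hg⟩ =>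
      mem_genTimesGA.mpr ⟨by linarith [hσ ω hpos], σ ω, hg, ha, by linarith⟩]
  refine sum_congr rfl fun τ _ => congrArg cnt (funext fun ω => propext ?_)
  constructor
  · rintro ⟨⟨⟨ht, hpos, ha, hlt, hle⟩, hg⟩, hτ⟩
    rw [hτ] at hlt hle
    exact ⟨ht, hpos, hτ, hg, ha, hlt, hle⟩
  · rintro ⟨ht, hpos, hτ, hg, ha, hlt, hle⟩
    rw [← hτ] at hlt hle
    exact ⟨⟨⟨ht, hpos, ha, hlt, hle⟩, hg⟩, hτ⟩

end Epidemic

theorem statement_16_general {Ω : Type*} [Fintype Ω] (tI : Ω → ℝ) (σ : Ω → Ω)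
    (hσ : ∀ ω, 0 < tI ω → tI (σ ω) < tI ω)
    (G : Ω → ℝ) (A : Ω → AppUse) (τT : Ω → ℝ≥0∞) (ξ : ℝ → ℝ)
    (t : ℝ)
    (a : AppUse)
    (hsup : ∀ t' : ℝ, t' < t → ∀ (g : ℝ) (a' : AppUse),
      (Finset.univ.filter (fun ω => tI ω = t' ∧ G ω = g ∧ A ω = a')).Nonempty →
      ∀ τ : ℝ, 0 < τ → ∀ ρ' : ℝ≥0∞,
        0 < prC (fun ω => tI ω = t' ∧ G ω = g ∧ A ω = a') (fun ω => τT ω = ρ') →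
          0 < 1 - ξ t' * FTa tI G A τT t' g a' τ ∧
          expecC (fun ω => tI ω = t' ∧ G ω = g ∧ A ω = a' ∧ τT ω = ρ')
              (ninf tI σ τ) =
            ((1 - ξ t' * (if (ρ' : EReal) ≤ (τ : ℝ) then (1 : ℝ) else 0)) /
                (1 - ξ t' * FTa tI G A τT t' g a' τ)) *
              expecC (fun ω => tI ω = t' ∧ G ω = g ∧ A ω = a') (ninf tI σ τ)) :
    ∀ ρ : ℝ, 0 < ρ →
      prC (fun ω => tI ω = t)
          (fun ω => 0 < tI ω ∧
            (τT (σ ω) : EReal) - ((tI ω - tI (σ ω) : ℝ) : EReal) ≤ (ρ : ℝ) ∧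
            A (σ ω) = a) -
        prC (fun ω => tI ω = t)
          (fun ω => 0 < tI ω ∧
            (τT (σ ω) : EReal) - ((tI ω - tI (σ ω) : ℝ) : EReal) ≤ ((0 : ℝ) : EReal) ∧
            A (σ ω) = a) =
      ∑ g ∈ Finset.univ.image G, ∑ τ ∈ genTimesGA tI G A t g a,
        ((FTa tI G A τT (t - τ) g a (ρ + τ) - FTa tI G A τT (t - τ) g a τ) /
            (1 - ξ (t - τ) * FTa tI G A τT (t - τ) g a τ)) *
          prC (fun ω => tI ω = t)
            (fun ω => 0 < tI ω ∧ tI ω - tI (σ ω) = τ ∧ G (σ ω) = g ∧ A (σ ω) = a) := by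
  intro ρ hρ
  simp only [prC, EReal.coe_sub_coe_le_coe_iff, zero_add]
  rw [div_sub_div_same, cnt_sub_cnt_infectorTested_eq_sum tI σ hσ G A τT t ρ a hρ.le, sum_div]
  refine sum_congr rfl fun g _ => ?_
  rw [sum_div]
  refine sum_congr rfl fun τ hτ => ?_
  obtain ⟨hτpos, ω₀, hg₀, ha₀, ht₀⟩ := mem_genTimesGA.mp hτ
  have hsupτ := hsup (t - τ) (by linarith) g a ⟨ω₀, by simpa using ⟨ht₀, hg₀, ha₀⟩⟩ τ hτpos
  rw [cnt_infectees_testTime_window_eq tI σ G A τT (ξ (t - τ)) t g τ ρ a hρ.le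
    fun ρ' hpos => (hsupτ ρ' hpos).2, mul_div_assoc]

/-- app-refined CDF of the infector's testing time.  Epidemic
setting with severity `G`, app usage `A`, testing time `τ^T : Ω → [0,∞]` (convention
`+∞ − τ = +∞`, realized in `EReal`) and `ξ : ℝ → [0,1]`.  With
`F̌^{T,a}_t(ρ) := P_t(τ̌^T_t ≤ ρ ∧ Â_t = a)` where `τ̌^T(ω) := τ^T(σ ω) − τ^σ(ω)`,
assuming the app-refined suppression hypothesis at all `t' < t`, for every `ρ > 0`:
`F̌^{T,a}_t(ρ) − F̌^{T,a}_t(0) = Σ_g Σ_{τ>0} ((F^T_{t−τ,g,a}(ρ+τ) − F^T_{t−τ,g,a}(τ))/(1 − ξ_{t−τ}·F^T_{t−τ,g,a}(τ))) · P_t(τ^σ_t = τ, Ĝ_t = g, Â_t = a)`,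
`g` ranging over the range of `G` and `τ` over the finitely many positive generation
times with `Ω_{t−τ,g,a}` nonempty. -/
theorem statement_16 {Ω : Type*} [Fintype Ω] (tI : Ω → ℝ) (σ : Ω → Ω)
    (hσ : ∀ ω, 0 < tI ω → tI (σ ω) < tI ω)
    (G : Ω → ℝ) (A : Ω → AppUse) (τT : Ω → ℝ≥0∞) (ξ : ℝ → ℝ)
    (hξ : ∀ s : ℝ, 0 ≤ ξ s ∧ ξ s ≤ 1) (t : ℝ)
    (hne : (Finset.univ.filter (fun ω => tI ω = t)).Nonempty) (a : AppUse)
    (hsup : ∀ t' : ℝ, t' < t → ∀ (g : ℝ) (a' : AppUse),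
      (Finset.univ.filter (fun ω => tI ω = t' ∧ G ω = g ∧ A ω = a')).Nonempty →
      ∀ τ : ℝ, 0 < τ → ∀ ρ' : ℝ≥0∞,
        0 < prC (fun ω => tI ω = t' ∧ G ω = g ∧ A ω = a') (fun ω => τT ω = ρ') →
          0 < 1 - ξ t' * FTa tI G A τT t' g a' τ ∧
          expecC (fun ω => tI ω = t' ∧ G ω = g ∧ A ω = a' ∧ τT ω = ρ')
              (ninf tI σ τ) =
            ((1 - ξ t' * (if (ρ' : EReal) ≤ (τ : ℝ) then (1 : ℝ) else 0)) /
                (1 - ξ t' * FTa tI G A τT t' g a' τ)) *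
              expecC (fun ω => tI ω = t' ∧ G ω = g ∧ A ω = a') (ninf tI σ τ)) :
    ∀ ρ : ℝ, 0 < ρ →
      prC (fun ω => tI ω = t)
          (fun ω => 0 < tI ω ∧
            (τT (σ ω) : EReal) - ((tI ω - tI (σ ω) : ℝ) : EReal) ≤ (ρ : ℝ) ∧
            A (σ ω) = a) -
        prC (fun ω => tI ω = t)
          (fun ω => 0 < tI ω ∧
            (τT (σ ω) : EReal) - ((tI ω - tI (σ ω) : ℝ) : EReal) ≤ ((0 : ℝ) : EReal) ∧
            A (σ ω) = a) =
      ∑ g ∈ Finset.univ.image G, ∑ τ ∈ genTimesGA tI G A t g a,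
        ((FTa tI G A τT (t - τ) g a (ρ + τ) - FTa tI G A τT (t - τ) g a τ) /
            (1 - ξ (t - τ) * FTa tI G A τT (t - τ) g a τ)) *
          prC (fun ω => tI ω = t)
            (fun ω => 0 < tI ω ∧ tI ω - tI (σ ω) = τ ∧ G (σ ω) = g ∧ A (σ ω) = a) :=
  statement_16_general tI σ hσ G A τT ξ t a hsup
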